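/- arXiv:2306.15145 — 2 statements merged into one kernel-verified Lean document; each statement's English description precedes it below -/
import Mathlib

section
/- In a core input-output network G, the relation σ₁ ⪯ σ₂ on simple nodes — defined by σ₁ ≺ σ₂, or σ₁ = σ₂ super-simple, or σ₁ and σ₂ lying in the same simple subnetwork — is reflexive on simple nodes and transitive, and any two super-simple nodes are comparable (⪯ restricts to a total order on super-simple nodes). -/
/-- A simple (directed) path from `a` to `b`: nonempty node list, consecutive arrows,
no repeated nodes. -/
def IsSPath {V : Type*} (E : V → V → Prop) (a b : V) (p : List V) : Prop :=
  p.Chain' E ∧ p.Nodup ∧ p.head? = some a ∧ p.getLast? = some b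

/-- An `ιo`-simple path. -/
def IoSPath {V : Type*} (E : V → V → Prop) (ι o : V) (p : List V) : Prop :=
  IsSPath E ι o p

/-- A node is simple if it lies on some `ιo`-simple path. -/
def SimpleNode {V : Type*} (E : V → V → Prop) (ι o v : V) : Prop :=
  ∃ p, IoSPath E ι o p ∧ v ∈ p

/-- A node is appendage if it is not simple. -/
def Appendage {V : Type*} (E : V → V → Prop) (ι o v : V) : Prop :=
  ¬ SimpleNode E ι o v

/-- A node is super-simple if it lies on every `ιo`-simple path. -/
def SuperSimple {V : Type*} (E : V → V → Prop) (ι o v : V) : Prop :=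
  ∀ p, IoSPath E ι o p → v ∈ p

/-- A core network: every node is reachable from `ι` and reaches `o`. -/
def Core {V : Type*} (E : V → V → Prop) (ι o : V) : Prop :=
  ∀ v, Relation.ReflTransGen E ι v ∧ Relation.ReflTransGen E v o

/-- `a` occurs (strictly) before `b` on some `ιo`-simple path. -/
def OccBefore {V : Type*} (E : V → V → Prop) (ι o a b : V) : Prop :=
  ∃ p, IoSPath E ι o p ∧ [a, b].Sublist p

/-- Strict partial order on simple nodes induced by super-simple nodes:
`a ≺ b` iff there is a super-simple node `ρ` with `a` (weakly) before `ρ`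
and `ρ` (weakly) before `b` along `ιo`-simple paths, and `a ≠ b`. -/
def SLt {V : Type*} (E : V → V → Prop) (ι o a b : V) : Prop :=
  a ≠ b ∧ ∃ ρ, SuperSimple E ι o ρ ∧ (a = ρ ∨ OccBefore E ι o a ρ) ∧
    (b = ρ ∨ OccBefore E ι o ρ b)

/-- Adjacent (consecutive) super-simple nodes. -/
def AdjSS {V : Type*} (E : V → V → Prop) (ι o ρ ρ' : V) : Prop :=
  SuperSimple E ι o ρ ∧ SuperSimple E ι o ρ' ∧ SLt E ι o ρ ρ' ∧
  ¬ ∃ ρ'', SuperSimple E ι o ρ'' ∧ SLt E ι o ρ ρ'' ∧ SLt E ι o ρ'' ρ'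

/-- The simple subnetwork between adjacent super-simple nodes `ρ ≺ ρ'`. -/
def SimpleSubnet {V : Type*} (E : V → V → Prop) (ι o ρ ρ' : V) : Set V :=
  {σ | SimpleNode E ι o σ ∧ SLt E ι o ρ σ ∧ SLt E ι o σ ρ'}

/-- Two simple nodes lie in the same simple subnetwork. -/
def SameSimpleSubnet {V : Type*} (E : V → V → Prop) (ι o a b : V) : Prop :=
  ∃ ρ ρ', AdjSS E ι o ρ ρ' ∧ a ∈ SimpleSubnet E ι o ρ ρ' ∧
    b ∈ SimpleSubnet E ι o ρ ρ'

/-- `a ⪯ b`: either `a ≺ b`, or `a = b` is super-simple, or `a`, `b` lie in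
the same simple subnetwork. -/
def SLe {V : Type*} (E : V → V → Prop) (ι o a b : V) : Prop :=
  SLt E ι o a b ∨ (a = b ∧ SuperSimple E ι o a) ∨ SameSimpleSubnet E ι o a b

/-- An appendage path from `a` to `b`: a simple path containing an appendage
node, all of whose nodes other than the endpoints are appendage. -/
def AppPath {V : Type*} (E : V → V → Prop) (ι o a b : V) (p : List V) : Prop :=
  IsSPath E a b p ∧ (∃ x ∈ p, Appendage E ι o x) ∧
  ∀ x ∈ p, x ≠ a → x ≠ b → Appendage E ι o x

/-- Reachability inside a set of nodes. -/
def ReachIn {V : Type*} (E : V → V → Prop) (s : Set V) (a b : V) : Prop :=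
  Relation.ReflTransGen (fun x y => E x y ∧ x ∈ s ∧ y ∈ s) a b

/-- `a` and `b` belong to the same transitive (strongly connected) component
of the subnetwork induced on `s`. -/
def SameTCIn {V : Type*} (E : V → V → Prop) (s : Set V) (a b : V) : Prop :=
  a ∈ s ∧ b ∈ s ∧ ReachIn E s a b ∧ ReachIn E s b a

/-- A super-appendage node: an appendage node whose transitive component in
every complementary subnetwork `C_S` consists only of appendage nodes. -/
def SuperAppendage {V : Type*} (E : V → V → Prop) (ι o τ : V) : Prop :=
  Appendage E ι o τ ∧ ∀ p, IoSPath E ι o p → τ ∉ p →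
    ∀ x, SameTCIn E {v | v ∉ p} τ x → Appendage E ι o x

/-- An appendage subnetwork: a transitive component of the subnetwork of
super-appendage nodes. -/
def IsAppSubnet {V : Type*} (E : V → V → Prop) (ι o : V) (A : Set V) : Prop :=
  ∃ τ, SuperAppendage E ι o τ ∧
    A = {x | SameTCIn E {v | SuperAppendage E ι o v} τ x}

/-- There is an appendage path from `σ` to `κ`. -/
def HasAppPathTo {V : Type*} (E : V → V → Prop) (ι o σ κ : V) : Prop :=
  ∃ p, AppPath E ι o σ κ p

/-- `σ = σᵘ(κ)`: if `κ` is simple then `σ = κ`; otherwise `σ` is a minimal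
upstream simple node with an appendage path to `κ`. -/
def IsSigmaU {V : Type*} (E : V → V → Prop) (ι o κ σ : V) : Prop :=
  (SimpleNode E ι o κ ∧ σ = κ) ∨
  (Appendage E ι o κ ∧ SimpleNode E ι o σ ∧ HasAppPathTo E ι o σ κ ∧
    ∀ σ', SimpleNode E ι o σ' → HasAppPathTo E ι o σ' κ → ¬ SLt E ι o σ' σ)

/-- There is an appendage path from some node of `A` to `σ`. -/
def HasAppPathFromSet {V : Type*} (E : V → V → Prop) (ι o : V) (A : Set V)
    (σ : V) : Prop :=
  ∃ τ ∈ A, ∃ p, AppPath E ι o τ σ p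

/-- `σ = σᵈ(A)`: a maximal downstream simple node with an appendage path
from `A`. -/
def IsSigmaD {V : Type*} (E : V → V → Prop) (ι o : V) (A : Set V) (σ : V) : Prop :=
  SimpleNode E ι o σ ∧ HasAppPathFromSet E ι o A σ ∧
    ∀ σ', SimpleNode E ι o σ' → HasAppPathFromSet E ι o A σ' → ¬ SLt E ι o σ σ'

/-- A simple (directed) cycle, given by its list of distinct nodes with a
closing arrow from the last node back to the first. -/
def IsSimpleCycle {V : Type*} (E : V → V → Prop) (c : List V) : Prop :=
  c.Chain' E ∧ c.Nodup ∧ ∃ a b, c.head? = some a ∧ c.getLast? = some b ∧ E b a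

/-- `τ` is a linked appendage node of the simple subnetwork determined by the
adjacent super-simple pair `ρ ≺ ρ'`. -/
def Linked {V : Type*} (E : V → V → Prop) (ι o ρ ρ' τ : V) : Prop :=
  Appendage E ι o τ ∧ ¬ SuperAppendage E ι o τ ∧
  ∃ p, IoSPath E ι o p ∧ τ ∉ p ∧ ∀ x, SameTCIn E {v | v ∉ p} τ x →
    x = τ ∨ x ∈ SimpleSubnet E ι o ρ ρ' ∨
      (Appendage E ι o x ∧ ¬ SuperAppendage E ι o x)

/-- The structural subnetwork determined by adjacent super-simple nodes
`ρ ≺ ρ'`: the two super-simple nodes, the simple subnetwork between them,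
and its linked appendage nodes. -/
def StructuralSet {V : Type*} (E : V → V → Prop) (ι o ρ ρ' : V) : Set V :=
  {ρ, ρ'} ∪ SimpleSubnet E ι o ρ ρ' ∪ {τ | Linked E ι o ρ ρ' τ}

/-- `L` is a structural subnetwork. -/
def IsStructSubnet {V : Type*} (E : V → V → Prop) (ι o : V) (L : Set V) : Prop :=
  ∃ ρ ρ', AdjSS E ι o ρ ρ' ∧ L = StructuralSet E ι o ρ ρ'

/-!
Everything rests on a splicing argument. If a super-simple node `ρ` precedes `x` on one
`ιo`-simple path `p` and follows it on another one `q`, then `q` up to `x` followed by `p`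
after `x` is a walk from `ι` to `o` avoiding `ρ`, and it contains an `ιo`-simple path avoiding
`ρ`, which is absurd. So a super-simple node lies on the same side of a given node on every
path; this makes `≺` a strict order, linear on the super-simple nodes (they all lie on one
path). A simple node `σ` that is not super-simple lies between the last super-simple node
before it and the first one after it on a path through `σ`, and these two are adjacent.
Transitivity of `⪯` comes down to the fact that a node strictly below an element of the simple
subnetwork of an adjacent pair `ρ ≺ ρ'` lies weakly below `ρ`.
-/

namespace List

variable {α : Type*} {a b c : α} {l : List α}

theorem pair_sublist_iff : [a, b] <+ l ↔ ∃ l₁ l₂, l = l₁ ++ l₂ ∧ a ∈ l₁ ∧ b ∈ l₂ := by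
  rw [cons_sublist_iff]; simp only [singleton_sublist]

theorem pair_sublist_or_pair_sublist (ha : a ∈ l) (hb : b ∈ l) (hab : a ≠ b) :
    [a, b] <+ l ∨ [b, a] <+ l := by
  obtain ⟨s, t, rfl⟩ := append_of_mem ha
  rcases mem_append.1 hb with hb | hb
  · exact Or.inr (pair_sublist_iff.2 ⟨s, a :: t, rfl, hb, mem_cons_self⟩)
  · exact Or.inl (pair_sublist_iff.2
      ⟨s ++ [a], t, by simp, by simp, (mem_cons.1 hb).resolve_left hab.symm⟩)

theorem Nodup.pair_sublist_trans (hl : l.Nodup) (hab : [a, b] <+ l) (hbc : [b, c] <+ l) :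
    [a, c] <+ l := by
  obtain ⟨l₁, l₂, rfl, ha, hb⟩ := pair_sublist_iff.1 hab
  obtain ⟨m₁, m₂, hm, hb', hc⟩ := pair_sublist_iff.1 hbc
  rcases append_eq_append_iff.1 hm with ⟨u, rfl, rfl⟩ | ⟨u, rfl, rfl⟩
  · exact pair_sublist_iff.2 ⟨l₁ ++ u, m₂, by simp, mem_append_left _ ha, hc⟩
  · exact (List.disjoint_of_nodup_append hl (mem_append_left _ hb') hb).elim

end List

theorem exists_isSPath_subset {V : Type*} {E : V → V → Prop} {a b : V} :
    ∀ {l : List V}, l.IsChain E → l.head? = some a → l.getLast? = some b →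
      ∃ p, IsSPath E a b p ∧ p ⊆ l
  | [], _, ha, _ => by simp at ha
  | [x], _, ha, hb => by
    obtain rfl : x = a := by simpa using ha
    obtain rfl : x = b := by simpa using hb
    exact ⟨[x], ⟨List.isChain_singleton x, List.nodup_singleton x, rfl, rfl⟩,
      List.Subset.refl _⟩
  | x :: y :: t, hc, ha, hb => by
    obtain rfl : x = a := by simpa using ha
    rw [List.isChain_cons_cons] at hc
    obtain ⟨p, ⟨hpc, hpn, hph, hpl⟩, hpt⟩ := exists_isSPath_subset hc.2 rfl (by simpa using hb)
    by_cases hx : x ∈ p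
    · obtain ⟨s, r, rfl⟩ := List.append_of_mem hx
      refine ⟨x :: r, ⟨List.IsChain.suffix hpc ⟨s, rfl⟩,
        hpn.sublist (List.sublist_append_right _ _), rfl,
        by rwa [List.getLast?_append_cons] at hpl⟩, ?_⟩
      exact List.cons_subset.2 ⟨List.mem_cons_self,
        fun z hz => List.mem_cons_of_mem _ (hpt (by simp [hz]))⟩
    · obtain ⟨p', rfl⟩ := List.head?_eq_some_iff.1 hph
      exact ⟨x :: y :: p', ⟨List.isChain_cons_cons.2 ⟨hc.1, hpc⟩, List.nodup_cons.2 ⟨hx, hpn⟩,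
        rfl, by simpa using hpl⟩, List.cons_subset_cons _ hpt⟩

theorem exists_isSPath_of_reflTransGen {V : Type*} {E : V → V → Prop} {a b : V}
    (h : Relation.ReflTransGen E a b) : ∃ p, IsSPath E a b p := by
  obtain ⟨l, hc, hl⟩ := List.exists_isChain_cons_of_relationReflTransGen h
  obtain ⟨p, hp, -⟩ := exists_isSPath_subset hc rfl (hl ▸ List.getLast?_eq_some_getLast _)
  exact ⟨p, hp⟩

theorem Set.Finite.exists_forall_not_rel {α : Type*} {r : α → α → Prop} [IsStrictOrder α r]
    {s : Set α} (hs : s.Finite) (hne : s.Nonempty) : ∃ a ∈ s, ∀ x ∈ s, ¬ r x a := by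
  obtain ⟨a, ha, hmin⟩ := (Set.wellFoundedOn_iff.1 (hs.wellFoundedOn (r := r))).has_min s hne
  exact ⟨a, ha, fun x hx hxa => hmin x hx ⟨hxa, hx, ha⟩⟩

section Network

variable {V : Type*} {E : V → V → Prop} {ι o a b c x ρ ρ' : V} {p : List V}

theorem superSimple_input : SuperSimple E ι o ι :=
  fun _ hp => List.mem_of_mem_head? hp.2.2.1

theorem IoSPath.occBefore_input (hp : IoSPath E ι o p) (hx : x ∈ p) (hxι : x ≠ ι) :
    OccBefore E ι o ι x := by
  obtain ⟨t, rfl⟩ := List.head?_eq_some_iff.1 hp.2.2.1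
  exact ⟨_, hp, List.cons_sublist_cons.2
    (List.singleton_sublist.2 ((List.mem_cons.1 hx).resolve_left hxι))⟩

theorem superSimple_output : SuperSimple E ι o o :=
  fun _ hp => List.mem_of_mem_getLast? hp.2.2.2

theorem IoSPath.occBefore_output (hp : IoSPath E ι o p) (hx : x ∈ p) (hxo : x ≠ o) :
    OccBefore E ι o x o := by
  obtain ⟨s, rfl⟩ := List.getLast?_eq_some_iff.1 hp.2.2.2
  refine ⟨_, hp, List.pair_sublist_iff.2 ⟨s, [o], rfl, ?_, List.mem_singleton_self o⟩⟩
  simpa [hxo] using hx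

theorem OccBefore.ne (h : OccBefore E ι o a b) : a ≠ b := by
  rintro rfl
  obtain ⟨p, hp, hap⟩ := h
  exact List.nodup_iff_sublist.1 hp.2.1 a hap

theorem SuperSimple.not_occBefore (hρ : SuperSimple E ι o ρ) (h : OccBefore E ι o ρ x) :
    ¬ OccBefore E ι o x ρ := by
  rintro ⟨q, ⟨hqc, hqn, hqh, -⟩, hxρ⟩
  obtain ⟨p, ⟨hpc, hpn, -, hpl⟩, hρx⟩ := h
  obtain ⟨p₁, p₂, rfl, hρp₁, hxp₂⟩ := List.pair_sublist_iff.1 hρx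
  obtain ⟨q₁, q₂, rfl, hxq₁, hρq₂⟩ := List.pair_sublist_iff.1 hxρ
  obtain ⟨s, p₃, rfl⟩ := List.append_of_mem hxp₂
  obtain ⟨q₃, t, rfl⟩ := List.append_of_mem hxq₁
  have hwalk : (q₃ ++ [x] ++ p₃).IsChain E :=
    List.IsChain.append_overlap (List.IsChain.prefix hqc ⟨t ++ q₂, by simp⟩)
      (List.IsChain.suffix hpc ⟨p₁ ++ s, by simp⟩) (List.cons_ne_nil _ _)
  obtain ⟨w, hw, hwsub⟩ := exists_isSPath_subset hwalk (by simpa using hqh) (by simpa using hpl)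
  have hρq₃ : ρ ∉ q₃ := fun h =>
    List.disjoint_of_nodup_append hqn (List.mem_append_left _ h) hρq₂
  have hρp₃ : ρ ∉ x :: p₃ := fun h =>
    List.disjoint_of_nodup_append hpn hρp₁ (List.mem_append_right _ h)
  have hρw : ρ ∈ q₃ ∨ ρ ∈ x :: p₃ := by simpa using hwsub (hρ w hw)
  exact hρw.elim hρq₃ hρp₃

theorem SuperSimple.pair_sublist_of_occBefore (hρ : SuperSimple E ι o ρ)
    (h : OccBefore E ι o ρ x) (hq : IoSPath E ι o p) (hx : x ∈ p) : [ρ, x].Sublist p :=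
  (List.pair_sublist_or_pair_sublist (hρ p hq) hx h.ne).resolve_right
    fun hxρ => hρ.not_occBefore h ⟨p, hq, hxρ⟩

theorem SuperSimple.pair_sublist_of_occBefore' (hρ : SuperSimple E ι o ρ)
    (h : OccBefore E ι o x ρ) (hq : IoSPath E ι o p) (hx : x ∈ p) : [x, ρ].Sublist p :=
  (List.pair_sublist_or_pair_sublist hx (hρ p hq) h.ne).resolve_right
    fun hρx => hρ.not_occBefore ⟨p, hq, hρx⟩ h

theorem SuperSimple.occBefore_trans (hρ : SuperSimple E ι o ρ) (hρa : OccBefore E ι o ρ a)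
    (hab : OccBefore E ι o a b) : OccBefore E ι o ρ b := by
  obtain ⟨q, hq, hab⟩ := hab
  exact ⟨q, hq, hq.2.1.pair_sublist_trans
    (hρ.pair_sublist_of_occBefore hρa hq (hab.subset (by simp))) hab⟩

theorem SuperSimple.occBefore_trans' (hρ : SuperSimple E ι o ρ) (hab : OccBefore E ι o a b)
    (hbρ : OccBefore E ι o b ρ) : OccBefore E ι o a ρ := by
  obtain ⟨q, hq, hab⟩ := hab
  exact ⟨q, hq, hq.2.1.pair_sublist_trans hab
    (hρ.pair_sublist_of_occBefore' hbρ hq (hab.subset (by simp)))⟩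

theorem SuperSimple.sLt_iff_occBefore (hρ : SuperSimple E ι o ρ) :
    SLt E ι o ρ x ↔ OccBefore E ι o ρ x := by
  refine ⟨fun ⟨hne, σ, _, hρσ, hσx⟩ => ?_, fun h => ⟨h.ne, ρ, hρ, Or.inl rfl, Or.inr h⟩⟩
  rcases hρσ with rfl | hρσ
  · exact hσx.resolve_left hne.symm
  · rcases hσx with rfl | hσx
    exacts [hρσ, hρ.occBefore_trans hρσ hσx]

theorem SuperSimple.sLt_iff_occBefore' (hρ : SuperSimple E ι o ρ) :
    SLt E ι o x ρ ↔ OccBefore E ι o x ρ := by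
  refine ⟨fun ⟨hne, σ, _, hxσ, hσρ⟩ => ?_, fun h => ⟨h.ne, ρ, hρ, Or.inr h, Or.inl rfl⟩⟩
  rcases hσρ with rfl | hσρ
  · exact hxσ.resolve_left hne
  · rcases hxσ with rfl | hxσ
    exacts [hσρ, hρ.occBefore_trans' hxσ hσρ]

theorem SLt.exists_superSimple (h : SLt E ι o a b) :
    ∃ ρ, SuperSimple E ι o ρ ∧ (a = ρ ∨ SLt E ι o a ρ) ∧ (ρ = b ∨ SLt E ι o ρ b) := by
  obtain ⟨-, ρ, hρ, haρ, hρb⟩ := h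
  exact ⟨ρ, hρ, haρ.imp_right hρ.sLt_iff_occBefore'.2, hρb.imp Eq.symm hρ.sLt_iff_occBefore.2⟩

theorem SuperSimple.sLt_trans (hρ : SuperSimple E ι o ρ) (haρ : SLt E ι o a ρ)
    (hρb : SLt E ι o ρ b) : SLt E ι o a b := by
  rw [hρ.sLt_iff_occBefore'] at haρ
  rw [hρ.sLt_iff_occBefore] at hρb
  refine ⟨?_, ρ, hρ, Or.inr haρ, Or.inr hρb⟩
  rintro rfl
  exact hρ.not_occBefore hρb haρ

theorem SuperSimple.sLt_trans_of_left (hρ : SuperSimple E ι o ρ) (hρa : SLt E ι o ρ a)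
    (hab : SLt E ι o a b) : SLt E ι o ρ b := by
  obtain ⟨σ, hσ, haσ, hσb⟩ := hab.exists_superSimple
  have hρσ : SLt E ι o ρ σ := by
    rcases haσ with rfl | haσ
    · exact hρa
    · rw [hρ.sLt_iff_occBefore] at hρa ⊢
      exact hρ.occBefore_trans hρa (hσ.sLt_iff_occBefore'.1 haσ)
  rcases hσb with rfl | hσb
  exacts [hρσ, hσ.sLt_trans hρσ hσb]

theorem SLt.trans (hab : SLt E ι o a b) (hbc : SLt E ι o b c) : SLt E ι o a c := by
  obtain ⟨ρ, hρ, haρ, hρb⟩ := hab.exists_superSimple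
  have hρc : SLt E ι o ρ c := by
    rcases hρb with rfl | hρb
    exacts [hbc, hρ.sLt_trans_of_left hρb hbc]
  rcases haρ with rfl | haρ
  exacts [hρc, hρ.sLt_trans haρ hρc]

instance : IsStrictOrder V (SLt E ι o) where
  irrefl _ h := h.1 rfl
  trans _ _ _ := SLt.trans

theorem SuperSimple.eq_or_sLt_or_sLt (hρ : SuperSimple E ι o ρ) (hp : IoSPath E ι o p)
    (hx : x ∈ p) : x = ρ ∨ SLt E ι o ρ x ∨ SLt E ι o x ρ := by
  by_cases hxρ : x = ρ
  · exact Or.inl hxρ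
  rcases List.pair_sublist_or_pair_sublist (hρ p hp) hx (Ne.symm hxρ) with h | h
  · exact Or.inr (Or.inl (hρ.sLt_iff_occBefore.2 ⟨p, hp, h⟩))
  · exact Or.inr (Or.inr (hρ.sLt_iff_occBefore'.2 ⟨p, hp, h⟩))

theorem AdjSS.eq_or_sLt_left (hadj : AdjSS E ι o ρ ρ') (hab : SLt E ι o a b)
    (hbρ' : SLt E ι o b ρ') : a = ρ ∨ SLt E ι o a ρ := by
  obtain ⟨hρ, -, hρρ', hnot⟩ := hadj
  obtain ⟨p, hp, -⟩ := hρ.sLt_iff_occBefore.1 hρρ'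
  obtain ⟨σ, hσ, haσ, hσb⟩ := hab.exists_superSimple
  have hσρ' : SLt E ι o σ ρ' := by
    rcases hσb with rfl | hσb
    exacts [hbρ', hσb.trans hbρ']
  have hσρ : σ = ρ ∨ SLt E ι o σ ρ :=
    (hρ.eq_or_sLt_or_sLt hp (hσ p hp)).imp_right
      (Or.resolve_left · fun hρσ => hnot ⟨σ, hσ, hρσ, hσρ'⟩)
  rcases haσ with rfl | haσ
  · exact hσρ
  · rcases hσρ with rfl | hσρ
    exacts [Or.inr haσ, Or.inr (haσ.trans hσρ)]

theorem AdjSS.eq_or_sLt_right (hadj : AdjSS E ι o ρ ρ') (hρb : SLt E ι o ρ b)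
    (hbc : SLt E ι o b c) : ρ' = c ∨ SLt E ι o ρ' c := by
  obtain ⟨hρ, hρ', hρρ', hnot⟩ := hadj
  obtain ⟨p, hp, -⟩ := hρ.sLt_iff_occBefore.1 hρρ'
  obtain ⟨σ, hσ, hbσ, hσc⟩ := hbc.exists_superSimple
  have hρσ : SLt E ι o ρ σ := by
    rcases hbσ with rfl | hbσ
    exacts [hρb, hρb.trans hbσ]
  have hρ'σ : ρ' = σ ∨ SLt E ι o ρ' σ := by
    rcases hρ'.eq_or_sLt_or_sLt hp (hσ p hp) with rfl | h | h
    exacts [Or.inl rfl, Or.inr h, (hnot ⟨σ, hσ, hρσ, h⟩).elim]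
  rcases hσc with rfl | hσc
  · exact hρ'σ
  · rcases hρ'σ with rfl | hρ'σ
    exacts [Or.inr hσc, Or.inr (hρ'σ.trans hσc)]

theorem SLe.trans (hab : SLe E ι o a b) (hbc : SLe E ι o b c) : SLe E ι o a c := by
  rcases hab with hab | ⟨rfl, -⟩ | ⟨ρ, ρ', hadj, haS, hbS⟩
  · rcases hbc with hbc | ⟨rfl, -⟩ | ⟨ρ, ρ', hadj, ⟨-, -, hbρ'⟩, ⟨-, hρc, -⟩⟩
    · exact Or.inl (hab.trans hbc)
    · exact Or.inl hab
    · refine Or.inl ?_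
      rcases hadj.eq_or_sLt_left hab hbρ' with rfl | haρ
      exacts [hρc, haρ.trans hρc]
  · exact hbc
  · rcases hbc with hbc | ⟨rfl, -⟩ | ⟨ρ₂, ρ₂', hadj₂, ⟨-, hρ₂b, hbρ₂'⟩, ⟨hc, hρ₂c, hcρ₂'⟩⟩
    · refine Or.inl ?_
      rcases hadj.eq_or_sLt_right hbS.2.1 hbc with rfl | hρ'c
      exacts [haS.2.2, haS.2.2.trans hρ'c]
    · exact Or.inr (Or.inr ⟨ρ, ρ', hadj, haS, hbS⟩)
    · refine Or.inr (Or.inr ⟨ρ, ρ', hadj, haS, hc, ?_, ?_⟩)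
      · rcases hadj₂.eq_or_sLt_left hbS.2.1 hbρ₂' with rfl | hρρ₂
        exacts [hρ₂c, hρρ₂.trans hρ₂c]
      · rcases hadj₂.eq_or_sLt_right hρ₂b hbS.2.2 with rfl | hρ₂'ρ'
        exacts [hcρ₂', hcρ₂'.trans hρ₂'ρ']

theorem SimpleNode.exists_adjSS (hσ : SimpleNode E ι o x) (hns : ¬ SuperSimple E ι o x) :
    ∃ ρ ρ', AdjSS E ι o ρ ρ' ∧ SLt E ι o ρ x ∧ SLt E ι o x ρ' := by
  obtain ⟨p, hp, hxp⟩ := hσ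
  have hcmp : ∀ ρ, SuperSimple E ι o ρ → SLt E ι o ρ x ∨ SLt E ι o x ρ := fun ρ hρ =>
    (hρ.eq_or_sLt_or_sLt hp hxp).resolve_left fun h => hns (h ▸ hρ)
  have hfin : ∀ s ⊆ {ρ | SuperSimple E ι o ρ}, s.Finite := fun s hs =>
    (List.finite_toSet p).subset fun ρ hρ => hs hρ p hp
  obtain ⟨ρ, ⟨hρ, hρx⟩, hmax⟩ :=
    (hfin {ρ | SuperSimple E ι o ρ ∧ SLt E ι o ρ x} fun _ h => h.1).exists_forall_not_rel
      (r := Function.swap (SLt E ι o))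
      ⟨ι, superSimple_input, superSimple_input.sLt_iff_occBefore.2
        (hp.occBefore_input hxp fun h => hns (h ▸ superSimple_input))⟩
  obtain ⟨ρ', ⟨hρ', hxρ'⟩, hmin⟩ :=
    (hfin {ρ | SuperSimple E ι o ρ ∧ SLt E ι o x ρ} fun _ h => h.1).exists_forall_not_rel
      (r := SLt E ι o)
      ⟨o, superSimple_output, superSimple_output.sLt_iff_occBefore'.2
        (hp.occBefore_output hxp fun h => hns (h ▸ superSimple_output))⟩
  refine ⟨ρ, ρ', ⟨hρ, hρ', hρx.trans hxρ', ?_⟩, hρx, hxρ'⟩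
  rintro ⟨σ, hσ, hρσ, hσρ'⟩
  rcases hcmp σ hσ with hσx | hxσ
  exacts [hmax σ ⟨hσ, hσx⟩ hρσ, hmin σ ⟨hσ, hxσ⟩ hσρ']

theorem SimpleNode.sLe_refl (hσ : SimpleNode E ι o x) : SLe E ι o x x := by
  by_cases hss : SuperSimple E ι o x
  · exact Or.inr (Or.inl ⟨rfl, hss⟩)
  · obtain ⟨ρ, ρ', hadj, hρx, hxρ'⟩ := hσ.exists_adjSS hss
    exact Or.inr (Or.inr ⟨ρ, ρ', hadj, ⟨hσ, hρx, hxρ'⟩, ⟨hσ, hρx, hxρ'⟩⟩)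

end Network

/-- The relation `⪯` is reflexive on simple nodes, transitive (on simple
nodes), and total on super-simple nodes. -/
theorem sle_order_properties {V : Type*} (E : V → V → Prop) (ι o : V)
    (hcore : Core E ι o) :
    (∀ σ, SimpleNode E ι o σ → SLe E ι o σ σ) ∧
    (∀ a b c, SimpleNode E ι o a → SimpleNode E ι o b → SimpleNode E ι o c →
      SLe E ι o a b → SLe E ι o b c → SLe E ι o a c) ∧
    (∀ ρ ρ', SuperSimple E ι o ρ → SuperSimple E ι o ρ' →
      SLe E ι o ρ ρ' ∨ SLe E ι o ρ' ρ) := by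
  refine ⟨fun σ hσ => hσ.sLe_refl, fun a b c _ _ _ => SLe.trans, fun ρ ρ' hρ hρ' => ?_⟩
  obtain ⟨p, hp⟩ := exists_isSPath_of_reflTransGen (hcore ι).2
  rcases hρ.eq_or_sLt_or_sLt hp (hρ' p hp) with rfl | h | h
  · exact Or.inl (Or.inr (Or.inl ⟨rfl, hρ⟩))
  · exact Or.inl (Or.inl h)
  · exact Or.inr (Or.inl h)
end

section
/- Let G be a core input-output network and A an appendage subnetwork with an appendage path from a simple node σᵘ(A) to A and from A to a simple node σᵈ(A). Then there is no ιo-simple path passing through any node of A; equivalently, concatenating a simple path ι ⇝ σ with an appendage path σ ⇝ A ⇝ σ' and a simple path σ' ⇝ o where σ ≺ σ' would make the nodes of A simple, a contradiction. Formally: for any simple nodes σ, σ' with appendage paths σ ⇝ A and A ⇝ σ', it is not the case that σ ≺ σ'. -/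
/-! If `σ ≺ σ'` through the super-simple node `ρ`, cut `ιo`-simple paths through `σ` and `σ'`
to segments `P : ι ⇝ σ` and `Q : σ' ⇝ o` that meet `ρ` at most in `σ`, resp. `σ'`. These
segments are disjoint, since merging them at a common node would give an `ιo`-simple path
missing `ρ`. The appendage paths `σ ⇝ A ⇝ σ'` merge into a simple path `M : σ ⇝ σ'` whose inner
nodes are appendage, and there is at least one of them. Appendage nodes avoid the simple nodes
of `P` and `Q`, so `P`, `M`, `Q` concatenate to an `ιo`-simple path through an appendage node. -/

section Paths

variable {V : Type*} {E : V → V → Prop} {a b c d x y : V} {p q s t : List V}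

theorem exists_split_at_first_mem (hxp : x ∈ p) (hxq : x ∈ q) :
    ∃ s y t, p = s ++ y :: t ∧ y ∈ q ∧ ∀ z ∈ s, z ∉ q := by
  induction p with
  | nil => simp at hxp
  | cons w p ih =>
    by_cases hw : w ∈ q
    · exact ⟨[], w, p, rfl, hw, by simp⟩
    · have hxp' : x ∈ p := (List.mem_cons.mp hxp).resolve_left (by rintro rfl; exact hw hxq)
      obtain ⟨s, y, t, rfl, hyq, hs⟩ := ih hxp'
      exact ⟨w :: s, y, t, rfl, hyq, by simpa [hw] using hs⟩

theorem IsSPath.head_mem (h : IsSPath E a b p) : a ∈ p :=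
  List.mem_of_mem_head? h.2.2.1

theorem IsSPath.getLast_mem (h : IsSPath E a b p) : b ∈ p :=
  List.mem_of_getLast? h.2.2.2

theorem IsSPath.singleton (a : V) : IsSPath E a a [a] :=
  ⟨List.isChain_singleton a, List.nodup_singleton a, rfl, rfl⟩

theorem IsSPath.cons (hac : E a c) (ha : a ∉ p) (h : IsSPath E c b p) :
    IsSPath E a b (a :: p) := by
  obtain ⟨hch, hnd, hhd, hlast⟩ := h
  obtain ⟨p, rfl⟩ : ∃ p', p = c :: p' := ⟨_, List.eq_cons_of_mem_head? hhd⟩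
  exact ⟨List.isChain_cons_cons.mpr ⟨hac, hch⟩, List.nodup_cons.mpr ⟨ha, hnd⟩, rfl,
    by rwa [List.getLast?_cons_cons]⟩

theorem IsSPath.prefix (h : IsSPath E a b (s ++ y :: t)) : IsSPath E a y (s ++ [y]) := by
  obtain ⟨hch, hnd, hhd, -⟩ := h
  rw [← List.singleton_append, ← List.append_assoc] at hch hnd hhd
  refine ⟨(List.isChain_append.mp hch).1, (List.nodup_append.mp hnd).1, ?_, by simp⟩
  rw [List.head?_append] at hhd ⊢
  cases s <;> simpa using hhd

theorem IsSPath.suffix (h : IsSPath E a b (s ++ y :: t)) : IsSPath E y b (y :: t) := by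
  obtain ⟨hch, hnd, -, hlast⟩ := h
  exact ⟨(List.isChain_append.mp hch).2.1, (List.nodup_append.mp hnd).2.1, rfl,
    by rwa [List.getLast?_append_cons] at hlast⟩

theorem IsSPath.getLast_notMem_left (h : IsSPath E a b (s ++ y :: t)) : b ∉ s := fun hb =>
  List.disjoint_of_nodup_append h.2.1 hb h.suffix.getLast_mem

theorem IsSPath.head_notMem_right (h : IsSPath E a b (s ++ y :: t)) : a ∉ t := fun ha => by
  have hnd := h.2.1
  cases s with
  | nil =>
    obtain rfl : a = y := by simpa using h.2.2.1.symm
    exact (List.nodup_cons.mp hnd).1 ha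
  | cons w s =>
    obtain rfl : a = w := by simpa using h.2.2.1.symm
    exact List.disjoint_of_nodup_append hnd (List.mem_cons_self ..) (List.mem_cons_of_mem _ ha)

theorem IsSPath.append (hp : IsSPath E a c p) (hq : IsSPath E c b q)
    (h : ∀ z ∈ p, z ∈ q → z = c) : IsSPath E a b (p ++ q.tail) := by
  obtain ⟨hpch, hpnd, hphd, hplast⟩ := hp
  obtain ⟨t, rfl⟩ : ∃ t, q = c :: t := ⟨_, List.eq_cons_of_mem_head? hq.2.2.1⟩
  obtain ⟨hqch, hqnd, -, hqlast⟩ := hq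
  refine ⟨List.isChain_append.mpr ⟨hpch, (List.isChain_cons.mp hqch).2, ?_⟩,
    List.nodup_append.mpr ⟨hpnd, (List.nodup_cons.mp hqnd).2, ?_⟩, ?_, ?_⟩
  · rw [hplast]
    rintro _ ⟨⟩
    exact (List.isChain_cons.mp hqch).1
  · rintro z hzp _ hzt rfl
    exact (List.nodup_cons.mp hqnd).1 (h z hzp (List.mem_cons_of_mem c hzt) ▸ hzt)
  · cases p <;> simp_all
  · cases t <;> simp_all

/-- `r` follows `p` up to its first node `y` on `q`, then follows `q`. -/
theorem IsSPath.merge (hp : IsSPath E a b p) (hq : IsSPath E c d q) (hxp : x ∈ p)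
    (hxq : x ∈ q) :
    ∃ y r, y ∈ p ∧ y ∈ q ∧ IsSPath E a d r ∧ y ∈ r ∧
      ∀ z ∈ r, z = y ∨ (z ∈ p ∧ z ≠ b) ∨ (z ∈ q ∧ z ≠ c) := by
  obtain ⟨s, y, t, rfl, hyq, hs⟩ := exists_split_at_first_mem hxp hxq
  obtain ⟨s', t', rfl⟩ := List.append_of_mem hyq
  have hr : IsSPath E a d ((s ++ [y]) ++ (y :: t').tail) :=
    hp.prefix.append hq.suffix fun z hz hz' => by
      rcases List.mem_append.mp hz with hz | hz
      · exact absurd (List.mem_append_right s' hz') (hs z hz)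
      · exact List.mem_singleton.mp hz
  refine ⟨y, _, by simp, hyq, hr, by simp, fun z hz => ?_⟩
  simp only [List.tail_cons, List.append_assoc, List.singleton_append, List.mem_append,
    List.mem_cons] at hz
  rcases hz with hz | rfl | hz
  · exact .inr (.inl ⟨by simp [hz], fun h => hp.getLast_notMem_left (h ▸ hz)⟩)
  · exact .inl rfl
  · exact .inr (.inr ⟨by simp [hz], fun h => hq.head_notMem_right (h ▸ hz)⟩)

theorem ReachIn.exists_isSPath {S : Set V} (h : ReachIn E S a b) (ha : a ∈ S) :
    ∃ p, IsSPath E a b p ∧ ∀ z ∈ p, z ∈ S := by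
  induction h using Relation.ReflTransGen.head_induction_on with
  | refl => exact ⟨[b], .singleton b, by simpa using ha⟩
  | @head a c hac _ ih =>
    obtain ⟨p, hp, hpS⟩ := ih hac.2.2
    by_cases hap : a ∈ p
    · obtain ⟨s, t, rfl⟩ := List.append_of_mem hap
      exact ⟨a :: t, hp.suffix, fun z hz => hpS z (by simp_all)⟩
    · exact ⟨a :: p, hp.cons hac.1 hap, by simpa [ha] using hpS⟩

end Paths

section Network

variable {V : Type*} {E : V → V → Prop} {ι o a b ρ σ σ' : V} {p P Q M : List V}

theorem SimpleNode.exists_isSPath_from_input (hσ : SimpleNode E ι o σ)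
    (hσρ : σ = ρ ∨ OccBefore E ι o σ ρ) :
    ∃ P, IsSPath E ι σ P ∧ (∀ z ∈ P, SimpleNode E ι o z) ∧ (ρ ∈ P → ρ = σ) := by
  rcases hσρ with rfl | ⟨p, hp, hsub⟩
  · obtain ⟨p, hp, hσp⟩ := hσ
    obtain ⟨s, t, rfl⟩ := List.append_of_mem hσp
    exact ⟨s ++ [σ], hp.prefix, fun z hz => ⟨_, hp, by simp at hz ⊢; tauto⟩, fun _ => rfl⟩
  · obtain ⟨r₁, r₂, rfl, hσr₁, hρr₂⟩ := List.cons_sublist_iff.mp hsub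
    obtain ⟨s, t, rfl⟩ := List.append_of_mem hσr₁
    have hp' : IoSPath E ι o (s ++ σ :: (t ++ r₂)) := by simpa using hp
    refine ⟨s ++ [σ], hp'.prefix, fun z hz => ⟨_, hp', by simp at hz ⊢; tauto⟩, fun hρ => ?_⟩
    exact absurd (List.singleton_sublist.mp hρr₂)
      (List.disjoint_of_nodup_append hp.2.1 (by simp at hρ ⊢; tauto))

theorem SimpleNode.exists_isSPath_to_output (hσ : SimpleNode E ι o σ')
    (hρσ : σ' = ρ ∨ OccBefore E ι o ρ σ') :
    ∃ Q, IsSPath E σ' o Q ∧ (∀ z ∈ Q, SimpleNode E ι o z) ∧ (ρ ∈ Q → ρ = σ') := by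
  rcases hρσ with rfl | ⟨q, hq, hsub⟩
  · obtain ⟨q, hq, hσq⟩ := hσ
    obtain ⟨s, t, rfl⟩ := List.append_of_mem hσq
    exact ⟨σ' :: t, hq.suffix, fun z hz => ⟨_, hq, by simp_all⟩, fun _ => rfl⟩
  · obtain ⟨r₁, r₂, rfl, hρr₁, hσr₂⟩ := List.cons_sublist_iff.mp hsub
    obtain ⟨s, t, rfl⟩ := List.append_of_mem (List.singleton_sublist.mp hσr₂)
    have hq' : IoSPath E ι o ((r₁ ++ s) ++ σ' :: t) := by simpa using hq
    refine ⟨σ' :: t, hq'.suffix, fun z hz => ⟨_, hq', by simp_all⟩, fun hρ => ?_⟩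
    exact absurd (List.mem_append_right s hρ)
      (List.disjoint_of_nodup_append hq.2.1 hρr₁)

theorem disjoint_of_superSimple (hρ : SuperSimple E ι o ρ) (hne : σ ≠ σ')
    (hP : IsSPath E ι σ P) (hQ : IsSPath E σ' o Q) (hPρ : ρ ∈ P → ρ = σ)
    (hQρ : ρ ∈ Q → ρ = σ') : ∀ z ∈ P, z ∉ Q := fun z hzP hzQ => by
  obtain ⟨y, r, hyP, hyQ, hr, -, hmem⟩ := hP.merge hQ hzP hzQ
  rcases hmem ρ (hρ r hr) with rfl | ⟨hρP, hρσ⟩ | ⟨hρQ, hρσ'⟩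
  · exact hne ((hPρ hyP).symm.trans (hQρ hyQ))
  · exact hρσ (hPρ hρP)
  · exact hρσ' (hQρ hρQ)

theorem AppPath.eq_left_or_appendage (hp : AppPath E ι o a b p)
    (hb : Appendage E ι o b) : ∀ z ∈ p, z = a ∨ Appendage E ι o z := fun z hz =>
  or_iff_not_imp_left.mpr fun hza => by
    by_cases hzb : z = b
    · exact hzb ▸ hb
    · exact hp.2.2 z hz hza hzb

theorem AppPath.eq_right_or_appendage (hp : AppPath E ι o a b p)
    (ha : Appendage E ι o a) : ∀ z ∈ p, z = b ∨ Appendage E ι o z := fun z hz =>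
  or_iff_not_imp_left.mpr fun hzb => by
    by_cases hza : z = a
    · exact hza ▸ ha
    · exact hp.2.2 z hz hza hzb

theorem IsAppSubnet.exists_isSPath {A : Set V} (hA : IsAppSubnet E ι o A) {τ₁ τ₂ : V}
    (hτ₁ : τ₁ ∈ A) (hτ₂ : τ₂ ∈ A) :
    ∃ w, IsSPath E τ₁ τ₂ w ∧ ∀ z ∈ w, Appendage E ι o z := by
  obtain ⟨τ₀, -, rfl⟩ := hA
  obtain ⟨w, hw, hwS⟩ := ReachIn.exists_isSPath (hτ₁.2.2.2.trans hτ₂.2.2.1) hτ₁.2.1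
  exact ⟨w, hw, fun z hz => (hwS z hz).1⟩

theorem exists_isSPath_through_appendage {A : Set V} (hA : IsAppSubnet E ι o A)
    (hne : σ ≠ σ') (hσ : SimpleNode E ι o σ)
    (hto : ∃ τ ∈ A, ∃ p, AppPath E ι o σ τ p) (hfrom : ∃ τ ∈ A, ∃ p, AppPath E ι o τ σ' p) :
    ∃ M, IsSPath E σ σ' M ∧ (∀ z ∈ M, z = σ ∨ z = σ' ∨ Appendage E ι o z) ∧
      ∃ x ∈ M, Appendage E ι o x := by
  obtain ⟨τ₁, hτ₁, pa, hpa⟩ := hto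
  obtain ⟨τ₂, hτ₂, pb, hpb⟩ := hfrom
  have happ : ∀ τ ∈ A, Appendage E ι o τ := fun τ hτ => by
    obtain ⟨_, -, rfl⟩ := hA
    exact hτ.2.1.1
  obtain ⟨w, hw, hwA⟩ := hA.exists_isSPath hτ₁ hτ₂
  have hpa' := hpa.eq_left_or_appendage (happ τ₁ hτ₁)
  have hpb' := hpb.eq_right_or_appendage (happ τ₂ hτ₂)
  obtain ⟨y₁, m, hy₁, -, hm, -, hmmem⟩ := hpa.1.merge hw hpa.1.getLast_mem hw.head_mem
  have hm' : ∀ z ∈ m, z = σ ∨ Appendage E ι o z := fun z hz => by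
    rcases hmmem z hz with rfl | ⟨hz, -⟩ | ⟨hz, -⟩
    exacts [hpa' _ hy₁, hpa' z hz, .inr (hwA z hz)]
  obtain ⟨y, M, hym, hypb, hM, hyM, hMmem⟩ := hm.merge hpb.1 hm.getLast_mem hpb.1.head_mem
  refine ⟨M, hM, fun z hz => ?_, y, hyM, ?_⟩
  · rcases hMmem z hz with rfl | ⟨hz, -⟩ | ⟨hz, -⟩
    · exact (hm' _ hym).imp_right .inr
    · exact (hm' z hz).imp_right .inr
    · exact .inr (hpb' z hz)
  · rcases hm' y hym with rfl | hy
    · rcases hpb' _ hypb with h | h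
      exacts [absurd h hne, absurd hσ h]
    · exact hy

theorem IsSPath.simpleNode_of_mem_middle (hP : IsSPath E ι σ P)
    (hPs : ∀ z ∈ P, SimpleNode E ι o z) (hQ : IsSPath E σ' o Q)
    (hQs : ∀ z ∈ Q, SimpleNode E ι o z) (hPQ : ∀ z ∈ P, z ∉ Q) (hM : IsSPath E σ σ' M)
    (hMs : ∀ z ∈ M, z = σ ∨ z = σ' ∨ Appendage E ι o z) : ∀ x ∈ M, SimpleNode E ι o x := by
  have hPM : IsSPath E ι σ' (P ++ M.tail) := hP.append hM fun z hzP hzM => by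
    rcases hMs z hzM with h | rfl | h
    · exact h
    · exact absurd hQ.head_mem (hPQ z hzP)
    · exact absurd (hPs z hzP) h
  have hW : IoSPath E ι o (P ++ M.tail ++ Q.tail) := hPM.append hQ fun z hz hzQ => by
    rcases List.mem_append.mp hz with hzP | hzM
    · exact absurd hzQ (hPQ z hzP)
    · rcases hMs z (List.mem_of_mem_tail hzM) with rfl | h | h
      · exact absurd hzQ (hPQ z hP.getLast_mem)
      · exact h
      · exact absurd (hQs z hzQ) h
  intro x hx
  rw [List.eq_cons_of_mem_head? hM.2.2.1, List.mem_cons] at hx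
  rcases hx with rfl | hx
  · exact hPs x hP.getLast_mem
  · exact ⟨_, hW, List.mem_append_left _ (List.mem_append_right P hx)⟩

end Network

theorem no_forward_appendage_order_general {V : Type*} (E : V → V → Prop) (ι o : V)
    (A : Set V) (hA : IsAppSubnet E ι o A) (σ σ' : V)
    (h1 : SimpleNode E ι o σ) (h2 : SimpleNode E ι o σ')
    (hto : ∃ τ ∈ A, ∃ p, AppPath E ι o σ τ p)
    (hfrom : ∃ τ ∈ A, ∃ p, AppPath E ι o τ σ' p) :
    ¬ SLt E ι o σ σ' := by
  rintro ⟨hne, ρ, hρ, hσρ, hρσ'⟩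
  obtain ⟨P, hP, hPs, hPρ⟩ := h1.exists_isSPath_from_input hσρ
  obtain ⟨Q, hQ, hQs, hQρ⟩ := h2.exists_isSPath_to_output hρσ'
  obtain ⟨M, hM, hMs, x, hxM, hx⟩ := exists_isSPath_through_appendage hA hne h1 hto hfrom
  exact hx (hP.simpleNode_of_mem_middle hPs hQ hQs
    (disjoint_of_superSimple hρ hne hP hQ hPρ hQρ) hM hMs x hxM)

/-- For simple nodes `σ, σ'` with appendage paths `σ ⇝ A` and `A ⇝ σ'`, it is
not the case that `σ ≺ σ'`. -/
theorem no_forward_appendage_order {V : Type*} (E : V → V → Prop) (ι o : V)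
    (hcore : Core E ι o) (A : Set V) (hA : IsAppSubnet E ι o A) (σ σ' : V)
    (h1 : SimpleNode E ι o σ) (h2 : SimpleNode E ι o σ')
    (hto : ∃ τ ∈ A, ∃ p, AppPath E ι o σ τ p)
    (hfrom : ∃ τ ∈ A, ∃ p, AppPath E ι o τ σ' p) :
    ¬ SLt E ι o σ σ' :=
  no_forward_appendage_order_general E ι o A hA σ σ' h1 h2 hto hfrom
end
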